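/- (Vertex Extension in s-joined families) Let ℋ be a [t]-edge-colored rooted graph with Δ^mon(ℋ) ≤ D, and 𝒢 an s-joined graph family on n vertices. Let ℋ+wu extend ℋ by an r-colored edge at w with deg_{H_r}(w) < D. If |V(ℋ)| ≤ n − 2sD − 3s and there is a (2s,D)-good embedding φ: ℋ ↪ 𝒢, then there is a (2s,D)-good embedding of ℋ+wu extending φ. -/

import Mathlib

open Finset
open scoped Classical

noncomputable section

/-- Number of ordered adjacent pairs between `X` and `Y` in the graph `G`. -/
def epairs {V : Type*} (G : SimpleGraph V) (X Y : Finset V) : ℕ :=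
  ((X ×ˢ Y).filter fun p => G.Adj p.1 p.2).card

/-- `G` is `(p,β)`-jumbled. -/
def IsJumbled {V : Type*} (G : SimpleGraph V) (p β : ℝ) : Prop :=
  ∀ X Y : Finset V,
    |(epairs G X Y : ℝ) - p * X.card * Y.card| ≤ β * Real.sqrt (X.card * Y.card)

/-- `G` is `s`-joined. -/
def IsJoined {V : Type*} (G : SimpleGraph V) (s : ℕ) : Prop :=
  ∀ X Y : Finset V, s ≤ X.card → s ≤ Y.card → 0 < epairs G X Y

/-- Ordered adjacent pairs between `X ⊆ V × [t]` and `Y ⊆ V` in the auxiliary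
bipartite graph of the family `𝒢`. -/
def famPairs {V : Type*} {t : ℕ} (𝒢 : Fin t → SimpleGraph V)
    (X : Finset (V × Fin t)) (Y : Finset V) : ℕ :=
  ((X ×ˢ Y).filter fun p => (𝒢 p.1.2).Adj p.1.1 p.2).card

/-- The family `𝒢` is `(p,β)`-jumbled (its auxiliary bipartite graph is bijumbled). -/
def FamJumbled {V : Type*} {t : ℕ} (𝒢 : Fin t → SimpleGraph V) (p β : ℝ) : Prop :=
  ∀ (X : Finset (V × Fin t)) (Y : Finset V),
    |(famPairs 𝒢 X Y : ℝ) - p * X.card * Y.card| ≤ β * Real.sqrt (X.card * Y.card)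

/-- The family `𝒢` is `s`-joined (its auxiliary bipartite graph is bijoined). -/
def FamJoined {V : Type*} {t : ℕ} (𝒢 : Fin t → SimpleGraph V) (s : ℕ) : Prop :=
  ∀ (X : Finset (V × Fin t)) (Y : Finset V), s ≤ X.card → s ≤ Y.card →
    0 < famPairs 𝒢 X Y

/-- `Γ_𝒢(X)`: the family neighbourhood of `X ⊆ V × [t]`. -/
def famNbhd {V : Type*} [Fintype V] {t : ℕ} (𝒢 : Fin t → SimpleGraph V)
    (X : Finset (V × Fin t)) : Finset V :=
  univ.filter fun v => ∃ p ∈ X, (𝒢 p.2).Adj p.1 v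

/-- A `[t]`-edge-coloured rooted graph: colour classes `graph i`, a set of roots,
and for each non-root vertex a parent joined to it by an edge of colour `parentColor`. -/
structure ColoredRootedGraph (A : Type*) (t : ℕ) where
  graph : Fin t → SimpleGraph A
  isRoot : A → Bool
  parent : A → A
  parentColor : A → Fin t
  parent_adj : ∀ a, isRoot a = false → (graph (parentColor a)).Adj a (parent a)

/-- The degree of `a` in colour `i` within the vertex subset `S`. -/
def monDegOn {A : Type*} {t : ℕ} (H : Fin t → SimpleGraph A)
    (S : Finset A) (a : A) (i : Fin t) : ℕ :=
  (S.filter fun b => (H i).Adj a b).card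

/-- `φ` is an embedding of the colour classes `H` into the family `𝒢`. -/
def IsColEmbedding {A V : Type*} {t : ℕ} (𝒢 : Fin t → SimpleGraph V)
    (H : Fin t → SimpleGraph A) (φ : A → V) : Prop :=
  Function.Injective φ ∧ ∀ i a b, (H i).Adj a b → (𝒢 i).Adj (φ a) (φ b)

/-- `P_φ(ℋ)` relative to the vertex subset `S`: pairs `(φ h, i)` with `h ∈ S` a
non-root vertex and `i` the colour of the edge from `h` to its parent. -/
def Pset {A V : Type*} {t : ℕ} (ℋ : ColoredRootedGraph A t)
    (S : Finset A) (φ : A → V) : Finset (V × Fin t) :=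
  (S.filter fun a => ℋ.isRoot a = false).image fun a => (φ a, ℋ.parentColor a)

/-- The quantity `R(X,φ)` for the embedding `φ` of the part of `ℋ` induced on `S`
into the family `𝒢` restricted to `V'`. -/
def Rfun {A V : Type*} [Fintype V] {t : ℕ} (𝒢 : Fin t → SimpleGraph V)
    (V' : Finset V) (ℋ : ColoredRootedGraph A t) (S : Finset A) (φ : A → V) (D : ℕ)
    (X : Finset (V × Fin t)) : ℤ :=
  (((famNbhd 𝒢 X ∩ V')) \ (S.image φ)).card
    - ∑ p ∈ X, ((D : ℤ) - ∑ a ∈ S.filter (fun a => φ a = p.1), (monDegOn ℋ.graph S a p.2 : ℤ))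
    - ((Pset ℋ S φ) ∩ X).card

/-- `φ` is an `(s,D)`-good embedding (of the part of `ℋ` on `S`, into `𝒢` restricted
to `V'`): `R(X,φ) ≥ 0` for every `X ⊆ V' × [t]` with `|X| ≤ s`. -/
def IsGood {A V : Type*} [Fintype V] {t : ℕ} (𝒢 : Fin t → SimpleGraph V)
    (V' : Finset V) (ℋ : ColoredRootedGraph A t) (S : Finset A) (φ : A → V)
    (s : ℝ) (D : ℕ) : Prop :=
  ∀ X : Finset (V × Fin t), (∀ p ∈ X, p.1 ∈ V') → (X.card : ℝ) ≤ s →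
    0 ≤ Rfun 𝒢 V' ℋ S φ D X

end

/-!
Write `R(X)` for `R(X, φ)` and call `X` tight if `|X| ≤ 2s`, `R(X) = 0` and `(φ w, r) ∉ X`.
`R` is submodular. A tight `X` has `|X| < s`: otherwise `R(X) = 0` bounds `Γ(X) \ φ(ℋ)` by
`2s(D + 1)` vertices, so at least `s` vertices lie outside `Γ(X) ∪ φ(ℋ)`, and `s`-joinedness
gives an edge from `X` to them. Hence, by submodularity, the union of two tight sets is tight,
and there is a largest tight set `M`. Adding `(φ w, r)` to `M` costs `D - deg_{H_r}(w) > 0` in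
the degree term, so `R(M ∪ {(φ w, r)}) ≥ 0` forces an `r`-neighbour `a` of `φ w` outside
`φ(ℋ) ∪ Γ(M)`. Sending the new vertex to `a` changes `R(X)` by at least
`[(φ w, r) ∈ X] - [a ∈ Γ(X)]`, and a set `X` with `a ∈ Γ(X)` and `(φ w, r) ∉ X` is not
contained in `M`, hence not tight, so `R(X) ≥ 1` there.
-/

lemma SupClosed.exists_isGreatest {α : Type*} [SemilatticeSup α] {S : Set α}
    (hS : SupClosed S) (hfin : S.Finite) (hne : S.Nonempty) : ∃ M, IsGreatest S M := by
  obtain ⟨M, hM⟩ := hfin.exists_maximal hne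
  exact ⟨M, hM.prop, fun X hX => le_sup_right.trans (hM.le_of_ge (hS hM.prop hX) le_sup_left)⟩

section FamNbhd

variable {V : Type*} [Fintype V] {t : ℕ} (𝒢 : Fin t → SimpleGraph V)

@[simp] lemma mem_famNbhd {X : Finset (V × Fin t)} {v : V} :
    v ∈ famNbhd 𝒢 X ↔ ∃ p ∈ X, (𝒢 p.2).Adj p.1 v := by
  simp [famNbhd]

lemma famNbhd_mono {X Y : Finset (V × Fin t)} (h : X ⊆ Y) :
    famNbhd 𝒢 X ⊆ famNbhd 𝒢 Y := by
  intro v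
  simp only [mem_famNbhd]
  exact fun ⟨p, hp, hadj⟩ => ⟨p, h hp, hadj⟩

@[simp] lemma famNbhd_empty : famNbhd 𝒢 ∅ = ∅ := by
  ext; simp

lemma famNbhd_union (X Y : Finset (V × Fin t)) :
    famNbhd 𝒢 (X ∪ Y) = famNbhd 𝒢 X ∪ famNbhd 𝒢 Y := by
  ext; simp [or_and_right, exists_or]

lemma FamJoined.card_compl_famNbhd_lt {s : ℕ} (hjoin : FamJoined 𝒢 s)
    {X : Finset (V × Fin t)} (hX : s ≤ X.card) : (famNbhd 𝒢 X)ᶜ.card < s := by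
  by_contra! h
  obtain ⟨⟨p, v⟩, hpv⟩ := card_pos.1 (hjoin X _ hX h)
  simp only [mem_filter, mem_product, mem_compl] at hpv
  exact hpv.1.2 ((mem_famNbhd 𝒢).2 ⟨p, hpv.1.1, hpv.2⟩)

end FamNbhd

namespace ColoredRootedGraph

variable {A : Type*} {t : ℕ}

/-- `ℋ + wu`, with `none` playing the new vertex `u`. -/
def addLeaf (ℋ : ColoredRootedGraph A t) (w : A) (r : Fin t) :
    ColoredRootedGraph (Option A) t where
  graph i :=
    { Adj := fun x y =>
        match x, y with
        | some x, some y => (ℋ.graph i).Adj x y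
        | some x, none => i = r ∧ x = w
        | none, some y => i = r ∧ y = w
        | none, none => False
      symm := ⟨by
        rintro (x | x) (y | y) h
        exacts [h, h, h, (ℋ.graph i).adj_symm h]⟩
      loopless := ⟨by
        rintro (x | x) h
        exacts [h, (ℋ.graph i).irrefl h]⟩ }
  isRoot o := o.elim false ℋ.isRoot
  parent o := o.elim (some w) fun x => some (ℋ.parent x)
  parentColor o := o.elim r ℋ.parentColor
  parent_adj := by
    rintro (_ | x) h
    exacts [⟨rfl, rfl⟩, ℋ.parent_adj x h]

variable (ℋ : ColoredRootedGraph A t) (w : A) (r i : Fin t)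

@[simp] lemma addLeaf_adj_some_some (x y : A) :
    ((ℋ.addLeaf w r).graph i).Adj (some x) (some y) ↔ (ℋ.graph i).Adj x y := Iff.rfl

@[simp] lemma addLeaf_adj_some_none (x : A) :
    ((ℋ.addLeaf w r).graph i).Adj (some x) none ↔ i = r ∧ x = w := Iff.rfl

@[simp] lemma addLeaf_adj_none_some (y : A) :
    ((ℋ.addLeaf w r).graph i).Adj none (some y) ↔ i = r ∧ y = w := Iff.rfl

@[simp] lemma not_addLeaf_adj_none_none : ¬((ℋ.addLeaf w r).graph i).Adj none none := id

variable [Fintype A]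

lemma monDegOn_addLeaf_some (x : A) :
    monDegOn (ℋ.addLeaf w r).graph univ (some x) i
      = monDegOn ℋ.graph univ x i + if i = r ∧ x = w then 1 else 0 := by
  simp only [monDegOn, card_filter, Fintype.sum_option, addLeaf_adj_some_none,
    addLeaf_adj_some_some]
  ring

lemma monDegOn_addLeaf_none :
    monDegOn (ℋ.addLeaf w r).graph univ none i = if i = r then 1 else 0 := by
  simp only [monDegOn, card_filter, Fintype.sum_option, not_addLeaf_adj_none_none,
    addLeaf_adj_none_some, if_false, zero_add]
  split_ifs with h
  · subst h; simp
  · simp [h]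

end ColoredRootedGraph

open ColoredRootedGraph

section AddLeaf

variable {V A : Type*} [Fintype A] {t : ℕ}

lemma image_univ_optionElim (φ : A → V) (a : V) :
    univ.image (fun o : Option A => o.elim a φ) = insert a (univ.image φ) := by
  ext v
  simp [Option.exists, eq_comm]

lemma Pset_addLeaf (ℋ : ColoredRootedGraph A t) (w : A) (r : Fin t) (φ : A → V) (a : V) :
    Pset (ℋ.addLeaf w r) univ (fun o => o.elim a φ) = insert (a, r) (Pset ℋ univ φ) := by
  ext p
  simp only [Pset, mem_image, mem_filter, mem_univ, true_and, mem_insert, Option.exists]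
  simp only [addLeaf, Option.elim, true_and, eq_comm (a := p)]

lemma IsColEmbedding.addLeaf {𝒢 : Fin t → SimpleGraph V} {ℋ : ColoredRootedGraph A t}
    {φ : A → V} (hφ : IsColEmbedding 𝒢 ℋ.graph φ) {w : A} {r : Fin t} {a : V}
    (ha : a ∉ univ.image φ) (hadj : (𝒢 r).Adj (φ w) a) :
    IsColEmbedding 𝒢 (ℋ.addLeaf w r).graph (fun o => o.elim a φ) := by
  have ha' : ∀ x, φ x ≠ a := fun x hx => ha (mem_image.2 ⟨x, mem_univ x, hx⟩)
  refine ⟨?_, ?_⟩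
  · rintro (_ | x) (_ | y) h
    exacts [rfl, absurd h.symm (ha' y), absurd h (ha' x), congrArg some (hφ.1 h)]
  · rintro i (_ | x) (_ | y) h
    · exact absurd h (not_addLeaf_adj_none_none ℋ w r i)
    · obtain ⟨rfl, rfl⟩ := h
      exact hadj.symm
    · obtain ⟨rfl, rfl⟩ := h
      exact hadj
    · exact hφ.2 i x y h

end AddLeaf

section Rfun

variable {V A : Type*} {t : ℕ}

lemma isGood_univ_iff [Fintype V] (𝒢 : Fin t → SimpleGraph V) (ℋ : ColoredRootedGraph A t)
    (S : Finset A) (φ : A → V) (k D : ℕ) :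
    IsGood 𝒢 univ ℋ S φ k D ↔
      ∀ X : Finset (V × Fin t), X.card ≤ k → 0 ≤ Rfun 𝒢 univ ℋ S φ D X := by
  simp [IsGood]

variable [Fintype A] (𝒢 : Fin t → SimpleGraph V) (ℋ : ColoredRootedGraph A t) (φ : A → V)

/-- `deg_{H_i}(φ⁻¹(v))` at `p = (v, i)`, read as `0` when `v ∉ φ(A)`. -/
noncomputable def fiberDeg (p : V × Fin t) : ℤ :=
  ∑ a ∈ univ.filter (fun a => φ a = p.1), (monDegOn ℋ.graph univ a p.2 : ℤ)

lemma fiberDeg_nonneg (p : V × Fin t) : 0 ≤ fiberDeg ℋ φ p :=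
  sum_nonneg fun _ _ => Nat.cast_nonneg _

lemma fiberDeg_of_injective (hφ : Function.Injective φ) (x : A) (i : Fin t) :
    fiberDeg ℋ φ (φ x, i) = monDegOn ℋ.graph univ x i := by
  simp [fiberDeg, hφ.eq_iff, sum_filter]

lemma fiberDeg_addLeaf (w : A) (r : Fin t) (a : V) (p : V × Fin t) :
    fiberDeg (ℋ.addLeaf w r) (fun o => o.elim a φ) p
      = fiberDeg ℋ φ p + (if p = (φ w, r) then 1 else 0)
        + (if p = (a, r) then 1 else 0) := by
  obtain ⟨v, i⟩ := p
  have hw : ∑ x, (if φ x = v ∧ i = r ∧ x = w then (1 : ℤ) else 0)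
      = if φ w = v ∧ i = r then 1 else 0 := by
    rw [sum_eq_single w (fun x _ hx => if_neg fun h => hx h.2.2) (absurd (mem_univ w))]
    simp only [and_true]
  rw [fiberDeg, fiberDeg, sum_filter, sum_filter, Fintype.sum_option]
  simp only [Option.elim_none, Option.elim_some, monDegOn_addLeaf_none, monDegOn_addLeaf_some]
  push_cast [Nat.cast_ite]
  simp only [ite_add_zero, sum_add_distrib, ← ite_and, Prod.ext_iff, hw, eq_comm (a := v)]
  ring

variable [Fintype V] (D : ℕ)

lemma Rfun_univ_eq (X : Finset (V × Fin t)) :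
    Rfun 𝒢 univ ℋ univ φ D X = (famNbhd 𝒢 X \ univ.image φ).card
      - ∑ p ∈ X, ((D : ℤ) - fiberDeg ℋ φ p) - (Pset ℋ univ φ ∩ X).card := by
  rw [Rfun, inter_univ]
  rfl

@[simp] lemma Rfun_univ_empty : Rfun 𝒢 univ ℋ univ φ D ∅ = 0 := by
  simp [Rfun_univ_eq]

lemma Rfun_union_add_inter_le (X Y : Finset (V × Fin t)) :
    Rfun 𝒢 univ ℋ univ φ D (X ∪ Y) + Rfun 𝒢 univ ℋ univ φ D (X ∩ Y)
      ≤ Rfun 𝒢 univ ℋ univ φ D X + Rfun 𝒢 univ ℋ univ φ D Y := by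
  simp only [Rfun_univ_eq]
  set I := univ.image φ
  set P := Pset ℋ univ φ
  have hN : ((famNbhd 𝒢 (X ∪ Y) \ I).card : ℤ) + ((famNbhd 𝒢 (X ∩ Y) \ I).card)
      ≤ (famNbhd 𝒢 X \ I).card + (famNbhd 𝒢 Y \ I).card := by
    have hsub : famNbhd 𝒢 (X ∩ Y) \ I ⊆ (famNbhd 𝒢 X \ I) ∩ (famNbhd 𝒢 Y \ I) := by
      intro v hv
      rw [mem_sdiff] at hv
      exact mem_inter.2 ⟨mem_sdiff.2 ⟨famNbhd_mono 𝒢 inter_subset_left hv.1, hv.2⟩,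
        mem_sdiff.2 ⟨famNbhd_mono 𝒢 inter_subset_right hv.1, hv.2⟩⟩
    have := card_union_add_card_inter (famNbhd 𝒢 X \ I) (famNbhd 𝒢 Y \ I)
    rw [famNbhd_union, union_sdiff_distrib]
    exact_mod_cast this ▸ Nat.add_le_add_left (card_le_card hsub) _
  have hP : ((P ∩ (X ∪ Y)).card : ℤ) + (P ∩ (X ∩ Y)).card
      = (P ∩ X).card + (P ∩ Y).card := by
    rw [inter_union_distrib_left, inter_inter_distrib_left]
    exact_mod_cast card_union_add_card_inter _ _
  have hsum := sum_union_inter (s₁ := X) (s₂ := Y) (f := fun p => (D : ℤ) - fiberDeg ℋ φ p)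
  linarith

lemma card_famNbhd_sdiff_le (X : Finset (V × Fin t)) :
    ((famNbhd 𝒢 X \ univ.image φ).card : ℤ)
      ≤ Rfun 𝒢 univ ℋ univ φ D X + X.card * (D + 1) := by
  have hdef : ∑ p ∈ X, ((D : ℤ) - fiberDeg ℋ φ p) ≤ X.card * D := by
    simpa using sum_le_sum fun p (_ : p ∈ X) => sub_le_self (D : ℤ) (fiberDeg_nonneg ℋ φ p)
  have hP : ((Pset ℋ univ φ ∩ X).card : ℤ) ≤ X.card := by
    exact_mod_cast card_le_card inter_subset_right
  rw [Rfun_univ_eq]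
  linarith

end Rfun

section Extension

variable {V A : Type*} [Fintype V] [Fintype A] {t : ℕ}
  {𝒢 : Fin t → SimpleGraph V} {ℋ : ColoredRootedGraph A t} {φ : A → V} {D : ℕ}

lemma card_lt_of_Rfun_eq_zero {s : ℕ} (hjoin : FamJoined 𝒢 s)
    (hcard : Fintype.card A + 2 * s * D + 3 * s ≤ Fintype.card V) {X : Finset (V × Fin t)}
    (hX : X.card ≤ 2 * s) (hX0 : Rfun 𝒢 univ ℋ univ φ D X = 0) : X.card < s := by
  by_contra! hsX
  have hcompl := hjoin.card_compl_famNbhd_lt 𝒢 hsX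
  have hN := card_famNbhd_sdiff_le 𝒢 ℋ φ D X
  rw [hX0, zero_add] at hN
  have hN' : (famNbhd 𝒢 X \ univ.image φ).card ≤ X.card * (D + 1) := by exact_mod_cast hN
  have hXD := Nat.mul_le_mul_right (D + 1) hX
  have hI : (univ.image φ).card ≤ Fintype.card A := card_image_le.trans_eq card_univ
  have hsplit := card_le_card_sdiff_add_card (s := famNbhd 𝒢 X) (t := univ.image φ)
  have htotal := card_compl_add_card (famNbhd 𝒢 X)
  linarith

lemma exists_isGreatest_Rfun_eq_zero {s : ℕ} (hjoin : FamJoined 𝒢 s)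
    (hcard : Fintype.card A + 2 * s * D + 3 * s ≤ Fintype.card V)
    (hgood : ∀ X : Finset (V × Fin t), X.card ≤ 2 * s → 0 ≤ Rfun 𝒢 univ ℋ univ φ D X)
    (q : V × Fin t) :
    ∃ M, IsGreatest
      {X : Finset (V × Fin t) | X.card ≤ 2 * s ∧ q ∉ X ∧ Rfun 𝒢 univ ℋ univ φ D X = 0} M := by
  refine SupClosed.exists_isGreatest ?_ (Set.toFinite _) ⟨∅, by simp⟩
  rintro X ⟨hX, hqX, hX0⟩ Y ⟨hY, hqY, hY0⟩
  rw [sup_eq_union]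
  have hXs := card_lt_of_Rfun_eq_zero hjoin hcard hX hX0
  have hYs := card_lt_of_Rfun_eq_zero hjoin hcard hY hY0
  have hXY : (X ∪ Y).card ≤ 2 * s := (card_union_le X Y).trans (by omega)
  have hsub := Rfun_union_add_inter_le 𝒢 ℋ φ D X Y
  have hU := hgood _ hXY
  have hI := hgood (X ∩ Y) ((card_le_card inter_subset_left).trans hX)
  exact ⟨hXY, by simp [hqX, hqY], by linarith⟩

lemma exists_adj_notMem_famNbhd (hφ : Function.Injective φ) {w : A} {r : Fin t}
    (hw : monDegOn ℋ.graph univ w r < D) {M : Finset (V × Fin t)}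
    (hM : Rfun 𝒢 univ ℋ univ φ D M = 0) (hq : (φ w, r) ∉ M)
    (hins : 0 ≤ Rfun 𝒢 univ ℋ univ φ D (insert (φ w, r) M)) :
    ∃ a ∉ univ.image φ, (𝒢 r).Adj (φ w) a ∧ a ∉ famNbhd 𝒢 M := by
  rw [Rfun_univ_eq] at hM hins
  rw [sum_insert hq, fiberDeg_of_injective ℋ φ hφ] at hins
  have hP : ((Pset ℋ univ φ ∩ M).card : ℤ)
      ≤ (Pset ℋ univ φ ∩ insert (φ w, r) M).card := by
    exact_mod_cast card_le_card (inter_subset_inter_left (subset_insert _ _))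
  have hw' : (monDegOn ℋ.graph univ w r : ℤ) < D := by exact_mod_cast hw
  have hlt : (famNbhd 𝒢 M \ univ.image φ).card
      < (famNbhd 𝒢 (insert (φ w, r) M) \ univ.image φ).card := by
    have : ((famNbhd 𝒢 M \ univ.image φ).card : ℤ)
        < (famNbhd 𝒢 (insert (φ w, r) M) \ univ.image φ).card := by linarith
    exact_mod_cast this
  obtain ⟨a, ha, haM⟩ := exists_mem_notMem_of_card_lt_card hlt
  rw [mem_sdiff] at ha
  replace haM : a ∉ famNbhd 𝒢 M := fun h => haM (mem_sdiff.2 ⟨h, ha.2⟩)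
  obtain ⟨p, hp, hadj⟩ := (mem_famNbhd 𝒢).1 ha.1
  rcases mem_insert.1 hp with rfl | hpM
  · exact ⟨a, ha.2, hadj, haM⟩
  · exact absurd ((mem_famNbhd 𝒢).2 ⟨p, hpM, hadj⟩) haM

variable (𝒢 ℋ φ D)

lemma Rfun_le_Rfun_addLeaf (w : A) (r : Fin t) {a : V} (ha : a ∉ univ.image φ)
    (X : Finset (V × Fin t)) :
    Rfun 𝒢 univ ℋ univ φ D X - (if a ∈ famNbhd 𝒢 X then 1 else 0)
        + (if (φ w, r) ∈ X then 1 else 0)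
      ≤ Rfun 𝒢 univ (ℋ.addLeaf w r) univ (fun o => o.elim a φ) D X := by
  rw [Rfun_univ_eq, Rfun_univ_eq, image_univ_optionElim, Pset_addLeaf]
  simp only [fiberDeg_addLeaf, sub_add_eq_sub_sub, sum_sub_distrib, sum_ite_eq']
  have hN : ((famNbhd 𝒢 X \ insert a (univ.image φ)).card : ℤ)
      = (famNbhd 𝒢 X \ univ.image φ).card - if a ∈ famNbhd 𝒢 X then 1 else 0 := by
    rw [sdiff_insert, card_erase_eq_ite]
    by_cases haX : a ∈ famNbhd 𝒢 X
    · have hmem : a ∈ famNbhd 𝒢 X \ univ.image φ := mem_sdiff.2 ⟨haX, ha⟩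
      rw [if_pos hmem, if_pos haX, Nat.cast_sub (card_pos.2 ⟨a, hmem⟩), Nat.cast_one]
    · rw [if_neg fun h => haX (mem_sdiff.1 h).1, if_neg haX, sub_zero]
  have hP : ((insert (a, r) (Pset ℋ univ φ) ∩ X).card : ℤ)
      ≤ (Pset ℋ univ φ ∩ X).card + if (a, r) ∈ X then 1 else 0 := by
    by_cases har : (a, r) ∈ X
    · rw [insert_inter_of_mem har, if_pos har]
      exact_mod_cast card_insert_le _ _
    · rw [insert_inter_of_notMem har, if_neg har, add_zero]
  rw [hN]
  linarith

variable {𝒢 ℋ φ D}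

lemma Rfun_addLeaf_nonneg {k : ℕ} {w : A} {r : Fin t} {a : V}
    (hgood : ∀ X : Finset (V × Fin t), X.card ≤ k → 0 ≤ Rfun 𝒢 univ ℋ univ φ D X)
    (ha : a ∉ univ.image φ)
    (hsep : ∀ X : Finset (V × Fin t), X.card ≤ k → (φ w, r) ∉ X →
      Rfun 𝒢 univ ℋ univ φ D X = 0 → a ∉ famNbhd 𝒢 X)
    (X : Finset (V × Fin t)) (hX : X.card ≤ k) :
    0 ≤ Rfun 𝒢 univ (ℋ.addLeaf w r) univ (fun o => o.elim a φ) D X := by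
  have hle := Rfun_le_Rfun_addLeaf 𝒢 ℋ φ D w r ha X
  have hR := hgood X hX
  split_ifs at hle with haX hqX <;> try linarith
  have : Rfun 𝒢 univ ℋ univ φ D X ≠ 0 := fun h => hsep X hX hqX h haX
  omega

end Extension

theorem joined_vertex_extension_general {V A : Type*} [Fintype V] [Fintype A] {t : ℕ}
    (𝒢 : Fin t → SimpleGraph V) (s D : ℕ)
    (hjoin : FamJoined 𝒢 s)
    (ℋ : ColoredRootedGraph A t)
    (w : A) (r : Fin t) (hw : monDegOn ℋ.graph Finset.univ w r < D)
    (hcard : Fintype.card A + 2 * s * D + 3 * s ≤ Fintype.card V)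
    (φ : A → V) (hemb : IsColEmbedding 𝒢 ℋ.graph φ)
    (hgood : IsGood 𝒢 Finset.univ ℋ Finset.univ φ (2 * s : ℝ) D) :
    ∃ (a : V) (ℋ' : ColoredRootedGraph (Option A) t),
      a ∉ Finset.univ.image φ ∧ (𝒢 r).Adj (φ w) a ∧
      (∀ i x y, (ℋ'.graph i).Adj (some x) (some y) ↔ (ℋ.graph i).Adj x y) ∧
      (∀ i x, (ℋ'.graph i).Adj (some x) none ↔ (i = r ∧ x = w)) ∧
      (∀ x, ℋ'.isRoot (some x) = ℋ.isRoot x) ∧ ℋ'.isRoot none = false ∧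
      (∀ x, ℋ'.parentColor (some x) = ℋ.parentColor x) ∧ ℋ'.parentColor none = r ∧
      ℋ'.parent none = some w ∧
      IsColEmbedding 𝒢 ℋ'.graph (fun o => o.elim a φ) ∧
      IsGood 𝒢 Finset.univ ℋ' Finset.univ (fun o => o.elim a φ) (2 * s : ℝ) D := by
  have h2s : (2 * s : ℝ) = ((2 * s : ℕ) : ℝ) := by norm_cast
  rw [h2s, isGood_univ_iff] at hgood
  obtain ⟨M, ⟨hM, hqM, hM0⟩, hMmax⟩ :=
    exists_isGreatest_Rfun_eq_zero hjoin hcard hgood (φ w, r)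
  have hMs := card_lt_of_Rfun_eq_zero hjoin hcard hM hM0
  obtain ⟨a, haI, hadj, haM⟩ := exists_adj_notMem_famNbhd hemb.1 hw hM0 hqM
    (hgood _ ((card_insert_le _ _).trans (by omega)))
  refine ⟨a, ℋ.addLeaf w r, haI, hadj, fun _ _ _ => Iff.rfl, fun _ _ => Iff.rfl, fun _ => rfl,
    rfl, fun _ => rfl, rfl, rfl, hemb.addLeaf haI hadj, ?_⟩
  rw [h2s, isGood_univ_iff]
  exact Rfun_addLeaf_nonneg hgood haI
    fun X hX hqX hX0 haX => haM (famNbhd_mono 𝒢 (hMmax ⟨hX, hqX, hX0⟩) haX)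

/-- Vertex Extension in `s`-joined families: if `𝒢` is an `s`-joined
family on `n` vertices and `|V(ℋ)| ≤ n − 2sD − 3s`, any `(2s,D)`-good embedding of
`ℋ` extends to a `(2s,D)`-good embedding of `ℋ + wu`. -/
theorem joined_vertex_extension {V A : Type*} [Fintype V] [Fintype A] {t : ℕ}
    (𝒢 : Fin t → SimpleGraph V) (s D : ℕ) (hs : 1 ≤ s) (ht : 1 ≤ t) (hD : 1 ≤ D)
    (hjoin : FamJoined 𝒢 s)
    (ℋ : ColoredRootedGraph A t)
    (hΔ : ∀ i x, monDegOn ℋ.graph Finset.univ x i ≤ D)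
    (w : A) (r : Fin t) (hw : monDegOn ℋ.graph Finset.univ w r < D)
    (hcard : Fintype.card A + 2 * s * D + 3 * s ≤ Fintype.card V)
    (φ : A → V) (hemb : IsColEmbedding 𝒢 ℋ.graph φ)
    (hgood : IsGood 𝒢 Finset.univ ℋ Finset.univ φ (2 * s : ℝ) D) :
    ∃ (a : V) (ℋ' : ColoredRootedGraph (Option A) t),
      a ∉ Finset.univ.image φ ∧ (𝒢 r).Adj (φ w) a ∧
      (∀ i x y, (ℋ'.graph i).Adj (some x) (some y) ↔ (ℋ.graph i).Adj x y) ∧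
      (∀ i x, (ℋ'.graph i).Adj (some x) none ↔ (i = r ∧ x = w)) ∧
      (∀ x, ℋ'.isRoot (some x) = ℋ.isRoot x) ∧ ℋ'.isRoot none = false ∧
      (∀ x, ℋ'.parentColor (some x) = ℋ.parentColor x) ∧ ℋ'.parentColor none = r ∧
      ℋ'.parent none = some w ∧
      IsColEmbedding 𝒢 ℋ'.graph (fun o => o.elim a φ) ∧
      IsGood 𝒢 Finset.univ ℋ' Finset.univ (fun o => o.elim a φ) (2 * s : ℝ) D :=
  joined_vertex_extension_general 𝒢 s D hjoin ℋ w r hw hcard φ hemb hgood
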